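/- For the monotone neighborhood functor, the uniform construction projection is a cover: given a set X and upward-closed α ∈ M X and natural number k, define X_* = X × {0,...,2^k−1} × P(X) × ℕ, define ⌈Y,j⌉ = { (u,i,Y,j) : u ∈ Y, i < 2^k } for Y ⊆ X and j ∈ ℕ, define α_* to be the upward closure in P(X_*) of the family { ⌈Y,j⌉ : Y ∈ α, j ∈ ℕ }, and let π : X_* → X be the first projection. Then π is surjective and (M π)(α_*) = α, i.e., for every Z ⊆ X, Z ∈ α iff π⁻¹(Z) ∈ α_*. -/

import Mathlib

/-- A family of subsets is upward closed. -/
def UpClosed {X : Type} (N : Set (Set X)) : Prop :=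
  ∀ Z Z' : Set X, Z ∈ N → Z ⊆ Z' → Z' ∈ N

/-- The basic member `⌈Y,j⌉ = { (u,i,Y,j) : u ∈ Y, i < 2^k }` of the uniform
construction for the monotone neighborhood functor. -/
def BasicMember {X : Type} (k : ℕ) (Y : Set X) (j : ℕ) :
    Set (X × Fin (2 ^ k) × Set X × ℕ) :=
  {p | p.1 ∈ Y ∧ p.2.2.1 = Y ∧ p.2.2.2 = j}

/-- The lifted neighborhood collection `α_*`: the upward closure of the
family of basic members `⌈Y,j⌉` with `Y ∈ α`. -/
def LiftedNbhd {X : Type} (k : ℕ) (α : Set (Set X)) :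
    Set (Set (X × Fin (2 ^ k) × Set X × ℕ)) :=
  {Z | ∃ Y ∈ α, ∃ j : ℕ, BasicMember k Y j ⊆ Z}

/-- The uniform construction projection for the monotone neighborhood
functor is a cover: the first projection `π : X_* → X` is surjective and
`(M π)(α_*) = α`, i.e. `Z ∈ α ↔ π⁻¹(Z) ∈ α_*`. -/
theorem mnf_uniform_construction_cover (X : Type) [Nonempty X]
    (α : Set (Set X)) (hα : UpClosed α) (k : ℕ) :
    Function.Surjective (fun p : X × Fin (2 ^ k) × Set X × ℕ => p.1) ∧
    ∀ Z : Set X, Z ∈ α ↔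
      (fun p : X × Fin (2 ^ k) × Set X × ℕ => p.1) ⁻¹' Z ∈ LiftedNbhd k α := by
  constructor
  · intro x
    exact ⟨⟨x, ⟨0, (Nat.pow_pos (by norm_num) : 0 < 2 ^ k)⟩, ∅, 0⟩, rfl⟩
  · intro Z
    constructor
    · intro hZ
      exact ⟨Z, hZ, 0, fun p hp => hp.1⟩
    · rintro ⟨Y, hY, j, hsub⟩
      apply hα Y Z hY
      intro u hu
      exact hsub (show (⟨u, ⟨0, (Nat.pow_pos (by norm_num) : 0 < 2 ^ k)⟩, Y, j⟩ : _) ∈ BasicMember k Y j from ⟨hu, rfl, rfl⟩)
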